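/- The function U(y) = −2 log(1 + a |y|^{2α+2}) satisfies ΔU(y) + |y|^{2α} V₀ e^{U(y)} = 0 for all y ∈ ℝ² \ {0}, where Δ is the Laplacian on ℝ². -/

import Mathlib

open MeasureTheory Metric Real Filter
open scoped RealInnerProductSpace Topology

noncomputable section

abbrev R2 : Type := EuclideanSpace ℝ (Fin 2)

def lap (u : R2 → ℝ) (x : R2) : ℝ :=
  ∑ j : Fin 2, fderiv ℝ (fun y => fderiv ℝ u y (EuclideanSpace.single j 1)) x
    (EuclideanSpace.single j 1)

def aconst (α V0 : ℝ) : ℝ := V0 / (8 * (1 + α) ^ 2)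

/-! The bubble is radial, `U(y) = f(s)` with `s = |y|²` and `f(s) = -2 log(1 + a s^{α+1})`.
For such functions on `ℝ²` one has `ΔU = 4 (s f'(s))'`. Here
`s f'(s) = -2a(α+1) s^{α+1} / (1 + a s^{α+1})`, whose derivative is
`-2a(α+1)² s^α / (1 + a s^{α+1})² = -2a(α+1)² s^α e^U`, and `8a(1+α)² = V₀`. -/

section Radial

variable {E : Type*} [NormedAddCommGroup E] [InnerProductSpace ℝ E]

theorem HasDerivAt.hasFDerivAt_comp_norm_sq {f : ℝ → ℝ} {f' : ℝ} {w : E}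
    (hf : HasDerivAt f f' (‖w‖ ^ 2)) :
    HasFDerivAt (fun x => f (‖x‖ ^ 2)) (f' • (2 • innerSL ℝ w)) w :=
  hf.comp_hasFDerivAt w (hasStrictFDerivAt_norm_sq w).hasFDerivAt

theorem fderiv_comp_norm_sq_apply {f : ℝ → ℝ} {f' : ℝ} {w : E}
    (hf : HasDerivAt f f' (‖w‖ ^ 2)) (v : E) :
    fderiv ℝ (fun x => f (‖x‖ ^ 2)) w v = 2 * f' * ⟪w, v⟫ := by
  rw [hf.hasFDerivAt_comp_norm_sq.fderiv]
  simp only [smul_apply, innerSL_apply_apply, smul_eq_mul, nsmul_eq_mul]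
  push_cast
  ring

theorem fderiv_fderiv_comp_norm_sq_apply {f g : ℝ → ℝ} {g' : ℝ} {y : E}
    (hf : ∀ᶠ t in 𝓝 (‖y‖ ^ 2), HasDerivAt f (g t) t) (hg : HasDerivAt g g' (‖y‖ ^ 2))
    (v : E) :
    fderiv ℝ (fun w => fderiv ℝ (fun x => f (‖x‖ ^ 2)) w v) y v
      = 4 * g' * ⟪y, v⟫ ^ 2 + 2 * g (‖y‖ ^ 2) * ‖v‖ ^ 2 := by
  have hfirst : (fun w => fderiv ℝ (fun x => f (‖x‖ ^ 2)) w v)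
      =ᶠ[𝓝 y] fun w => 2 * g (‖w‖ ^ 2) * ⟪w, v⟫ := by
    filter_upwards [((continuous_norm.pow 2).tendsto y).eventually hf] with w hw
    exact fderiv_comp_norm_sq_apply hw v
  have hsecond : HasFDerivAt (fun w => 2 * g (‖w‖ ^ 2) * ⟪w, v⟫) _ y :=
    (hg.hasFDerivAt_comp_norm_sq.const_mul 2).mul
      ((hasFDerivAt_id y).inner ℝ (hasFDerivAt_const v y))
  rw [hfirst.fderiv_eq, hsecond.fderiv]
  simp only [id_eq, add_apply, smul_apply, ContinuousLinearMap.comp_apply,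
    ContinuousLinearMap.prod_apply, ContinuousLinearMap.id_apply, zero_apply, fderivInnerCLM_apply,
    inner_zero_right, inner_self_eq_norm_sq_to_K, ringHom_apply, zero_add, smul_eq_mul,
    coe_innerSL_apply, nsmul_eq_mul, Nat.cast_ofNat]
  ring

theorem lap_comp_norm_sq {f g : ℝ → ℝ} {g' : ℝ} {y : R2}
    (hf : ∀ᶠ t in 𝓝 (‖y‖ ^ 2), HasDerivAt f (g t) t) (hg : HasDerivAt g g' (‖y‖ ^ 2)) :
    lap (fun x => f (‖x‖ ^ 2)) y = 4 * (g (‖y‖ ^ 2) + ‖y‖ ^ 2 * g') := by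
  simp only [lap, fderiv_fderiv_comp_norm_sq_apply hf hg, EuclideanSpace.inner_single_right,
    PiLp.norm_single, EuclideanSpace.real_norm_sq_eq y, ringHom_apply, one_mul, Fin.sum_univ_two,
    norm_one, one_pow, mul_one]
  ring

end Radial

section BubbleProfile

variable {α a t : ℝ}

theorem one_add_mul_rpow_pos (ha : 0 ≤ a) (ht : 0 < t) : 0 < 1 + a * t ^ (α + 1) := by
  positivity

theorem hasDerivAt_rpow_add_one (ht : 0 < t) :
    HasDerivAt (fun x => x ^ (α + 1)) ((α + 1) * t ^ α) t := by
  simpa using Real.hasDerivAt_rpow_const (p := α + 1) (Or.inl ht.ne')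

theorem hasDerivAt_neg_two_mul_log_one_add_mul_rpow (ha : 0 ≤ a) (ht : 0 < t) :
    HasDerivAt (fun x => -2 * log (1 + a * x ^ (α + 1)))
      (-2 * a * (α + 1) * t ^ α / (1 + a * t ^ (α + 1))) t := by
  have hD := ((hasDerivAt_rpow_add_one (α := α) ht).const_mul a).const_add 1
  refine ((hD.log (one_add_mul_rpow_pos ha ht).ne').const_mul (-2)).congr_deriv ?_
  ring

theorem hasDerivAt_mul_rpow_div_one_add_mul_rpow (ha : 0 ≤ a) (ht : 0 < t) :
    HasDerivAt (fun x => -2 * a * (α + 1) * x ^ α / (1 + a * x ^ (α + 1)))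
      (-2 * a * (α + 1) * t ^ (α - 1) * (α - a * t ^ (α + 1)) / (1 + a * t ^ (α + 1)) ^ 2) t := by
  have hN := (Real.hasDerivAt_rpow_const (p := α) (Or.inl ht.ne')).const_mul (-2 * a * (α + 1))
  have hD := ((hasDerivAt_rpow_add_one (α := α) ht).const_mul a).const_add 1
  refine (hN.div hD (one_add_mul_rpow_pos ha ht).ne').congr_deriv ?_
  rw [Real.rpow_add ht, Real.rpow_sub ht, Real.rpow_one]
  field_simp
  ring

theorem lap_neg_two_mul_log_one_add_mul_rpow {y : R2} (hy : y ≠ 0) (ha : 0 ≤ a) :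
    lap (fun x => -2 * log (1 + a * (‖x‖ ^ 2) ^ (α + 1))) y
      = -(8 * a * (α + 1) ^ 2) * (‖y‖ ^ 2) ^ α * exp (-2 * log (1 + a * (‖y‖ ^ 2) ^ (α + 1))) := by
  have hs : 0 < ‖y‖ ^ 2 := by positivity
  have hD := one_add_mul_rpow_pos (α := α) ha hs
  rw [lap_comp_norm_sq ((eventually_gt_nhds hs).mono fun t ht =>
      hasDerivAt_neg_two_mul_log_one_add_mul_rpow ha ht)
    (hasDerivAt_mul_rpow_div_one_add_mul_rpow ha hs)]
  have hexp : exp (-2 * log (1 + a * (‖y‖ ^ 2) ^ (α + 1)))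
      = ((1 + a * (‖y‖ ^ 2) ^ (α + 1)) ^ 2)⁻¹ := by
    rw [← Real.log_rpow hD, Real.exp_log (by positivity), Real.rpow_neg hD.le, Real.rpow_two]
  rw [hexp, Real.rpow_sub hs, Real.rpow_one]
  field_simp
  rw [Real.rpow_add hs, Real.rpow_one]
  ring

end BubbleProfile

theorem norm_rpow_two_mul {E : Type*} [SeminormedAddCommGroup E] (x : E) (p : ℝ) :
    ‖x‖ ^ (2 * p) = (‖x‖ ^ 2) ^ p := by
  exact_mod_cast Real.rpow_natCast_mul (norm_nonneg x) 2 p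

/-- Equation (2.4): the standard bubble `U(y) = -2 log(1 + a|y|^{2α+2})` solves
`ΔU + |y|^{2α} V₀ e^U = 0` away from the origin. -/
theorem bubble_solves_liouville (α V0 : ℝ) (hα : 0 < α) (hV0 : 0 < V0) :
    ∀ y : R2, y ≠ 0 →
      lap (fun w => -2 * Real.log (1 + aconst α V0 * ‖w‖ ^ (2 * α + 2))) y
        + ‖y‖ ^ (2 * α) * V0 *
            Real.exp (-2 * Real.log (1 + aconst α V0 * ‖y‖ ^ (2 * α + 2))) = 0 := by
  intro y hy
  have ha : 0 ≤ aconst α V0 := by unfold aconst; positivity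
  have hV0_eq : 8 * aconst α V0 * (α + 1) ^ 2 = V0 := by
    unfold aconst
    field_simp
    ring
  have hexponent : 2 * α + 2 = 2 * (α + 1) := by ring
  simp only [hexponent, norm_rpow_two_mul]
  rw [lap_neg_two_mul_log_one_add_mul_rpow hy ha, hV0_eq]
  ring
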